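/- arXiv:1905.02381 — 5 statements merged into one kernel-verified Lean document; each statement's English description precedes it below -/
import Mathlib

section
/- For every natural number n ≥ 2, we have Σ_{i=1}^{n} 1/i > 2 · Σ_{i=n+1}^{2n} 1/i; equivalently, Σ_{i=1}^{n} (1/i − 2/(n+i)) > 0. -/
/-! Each term `1/i − 2/(n+i)` of the second sum is nonnegative because `i ≤ n`, and the term
`i = 1` is positive because `1 < n`. The first inequality is the same statement after
shifting the index of `∑_{i=n+1}^{2n} 1/i` down by `n`. -/

open Finset

lemma two_div_add_le_one_div {x y : ℝ} (hx : 0 < x) (hxy : x ≤ y) : 2 / (y + x) ≤ 1 / x := by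
  rw [div_le_div_iff₀ (by linarith) hx]
  linarith

lemma two_div_add_lt_one_div {x y : ℝ} (hx : 0 < x) (hxy : x < y) : 2 / (y + x) < 1 / x := by
  rw [div_lt_div_iff₀ (by linarith) hx]
  linarith

lemma sum_Icc_add_two_mul_one_div (n : ℕ) :
    ∑ i ∈ Icc (n + 1) (2 * n), (1 : ℝ) / i = ∑ i ∈ Icc 1 n, (1 : ℝ) / (n + i) := by
  rw [two_mul, ← map_add_left_Icc 1 n n, sum_map]
  simp

lemma sum_Icc_one_div_sub_two_div_add_pos {n : ℕ} (hn : 2 ≤ n) :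
    0 < ∑ i ∈ Icc 1 n, ((1 : ℝ) / i - 2 / (n + i)) := by
  have hn' : (1 : ℝ) < n := by exact_mod_cast hn
  refine sum_pos' (fun i hi => ?_) ⟨1, mem_Icc.mpr ⟨le_rfl, by omega⟩, ?_⟩
  · obtain ⟨h1i, hin⟩ := mem_Icc.mp hi
    exact sub_nonneg.mpr <|
      two_div_add_le_one_div (by exact_mod_cast h1i) (by exact_mod_cast hin)
  · simpa using two_div_add_lt_one_div one_pos hn'

/-- For n ≥ 2, `∑_{i=1}^{n} 1/i > 2 · ∑_{i=n+1}^{2n} 1/i`; equivalently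
`∑_{i=1}^{n} (1/i − 2/(n+i)) > 0`. -/
theorem stmt_3 (n : ℕ) (hn : 2 ≤ n) :
    (2 * ∑ i ∈ Finset.Icc (n + 1) (2 * n), (1 : ℝ) / (i : ℝ)) <
        ∑ i ∈ Finset.Icc 1 n, (1 : ℝ) / (i : ℝ) ∧
      0 < ∑ i ∈ Finset.Icc 1 n, ((1 : ℝ) / (i : ℝ) - 2 / ((n : ℝ) + (i : ℝ))) := by
  have hpos := sum_Icc_one_div_sub_two_div_add_pos hn
  refine ⟨?_, hpos⟩
  rw [sum_Icc_add_two_mul_one_div, mul_sum, ← sub_pos, ← sum_sub_distrib]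
  simpa only [mul_one_div] using hpos
end

section
/- For every odd natural number k ≥ 1, we have Σ_{i=1}^{(k+1)/2} 1/i > 2 · Σ_{j=(k+3)/2}^{k} 1/j. -/
/-!
Write `k = 2m + 1`. The sum over `j` runs over `j = i + (m + 1)` with `1 ≤ i ≤ m`, and
`2 / (i + (m + 1)) ≤ 1 / i` because `i ≤ m + 1`; so twice that sum is at most `∑_{i=1}^m 1/i`,
which is strictly smaller than `∑_{i=1}^{m+1} 1/i`.
-/

open Finset

lemma two_div_add_le_one_div_s4 {a b : ℝ} (ha : 0 < a) (hab : a ≤ b) : 2 / (a + b) ≤ 1 / a := by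
  rw [div_le_div_iff₀ (by linarith) ha]
  linarith

lemma sum_Icc_one_div_shift (m c : ℕ) :
    ∑ j ∈ Icc (1 + c) (m + c), (1 : ℝ) / j = ∑ i ∈ Icc 1 m, (1 : ℝ) / (i + c) := by
  rw [← map_add_right_Icc, sum_map]
  simp

lemma two_mul_sum_upper_half_le (m : ℕ) :
    2 * ∑ j ∈ Icc (m + 2) (2 * m + 1), (1 : ℝ) / j ≤ ∑ i ∈ Icc 1 m, (1 : ℝ) / i := by
  rw [show m + 2 = 1 + (m + 1) by omega, show 2 * m + 1 = m + (m + 1) by omega,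
    sum_Icc_one_div_shift, mul_sum]
  refine sum_le_sum fun i hi => ?_
  obtain ⟨hi1, him⟩ := mem_Icc.mp hi
  rw [mul_one_div]
  exact two_div_add_le_one_div_s4 (by exact_mod_cast hi1) (by exact_mod_cast him.trans m.le_succ)

lemma sum_Icc_one_div_lt_succ (m : ℕ) :
    ∑ i ∈ Icc 1 m, (1 : ℝ) / i < ∑ i ∈ Icc 1 (m + 1), (1 : ℝ) / i := by
  rw [sum_Icc_succ_top (by omega)]
  exact lt_add_of_pos_right _ (by positivity)

theorem stmt_4_general (k : ℕ) (hodd : Odd k) :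
    (2 * ∑ j ∈ Finset.Icc ((k + 3) / 2) k, (1 : ℝ) / (j : ℝ)) <
      ∑ i ∈ Finset.Icc 1 ((k + 1) / 2), (1 : ℝ) / (i : ℝ) := by
  obtain ⟨m, rfl⟩ := hodd
  rw [show (2 * m + 1 + 3) / 2 = m + 2 by omega, show (2 * m + 1 + 1) / 2 = m + 1 by omega]
  exact (two_mul_sum_upper_half_le m).trans_lt (sum_Icc_one_div_lt_succ m)

/-- Odd-k case: for odd k ≥ 1,
`∑_{i=1}^{(k+1)/2} 1/i > 2 · ∑_{j=(k+3)/2}^{k} 1/j`. -/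
theorem stmt_4 (k : ℕ) (hk : 1 ≤ k) (hodd : Odd k) :
    (2 * ∑ j ∈ Finset.Icc ((k + 3) / 2) k, (1 : ℝ) / (j : ℝ)) <
      ∑ i ∈ Finset.Icc 1 ((k + 1) / 2), (1 : ℝ) / (i : ℝ) :=
  stmt_4_general k hodd
end

section
/- Let k ≥ 3 be a natural number and let US_1, …, US_k be real numbers with −2 ≤ US_i ≤ 2 for all i. If US_i ∈ {1, 2} (i.e., 1 ≤ US_i ≤ 2) for every i with 1 ≤ i ≤ ⌈k/2⌉, then the weighted sum Σ_{i=1}^{k} US_i/i is strictly positive (and hence US_overall = (Σ_{i=1}^{k} US_i/i)/(Σ_{i=1}^{k} 1/i) is strictly positive). -/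
/-!
Since `(k + 1) / 2 = m ≥ k - m`, every rating in the first `m` places contributes at least `1 / i`
and every later one at least `-2 / i`. The head `∑_{i ≤ m} 1 / i` is at least `2 - 1 / m`, while each
of the at most `m` tail terms is at most `1 / (m + 1)`, so twice the tail is at most `2m / (m + 1)`,
and `2m / (m + 1) < 2 - 1 / m` as soon as `m ≥ 2`.
-/

open Finset

lemma sum_Ioc_inv_le (m n : ℕ) :
    ∑ i ∈ Ioc m n, (i : ℝ)⁻¹ ≤ (n - m : ℕ) * ((m : ℝ) + 1)⁻¹ := by
  rw [← Nat.card_Ioc, ← nsmul_eq_mul]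
  refine sum_le_card_nsmul _ _ _ fun i hi => ?_
  have hi : (m : ℝ) + 1 ≤ i := by exact_mod_cast (mem_Ioc.1 hi).1
  exact inv_anti₀ (by positivity) hi

lemma two_sub_inv_le_sum_Icc_inv {m : ℕ} (hm : 1 ≤ m) :
    2 - (m : ℝ)⁻¹ ≤ ∑ i ∈ Icc 1 m, (i : ℝ)⁻¹ := by
  have hm' : (0 : ℝ) < m := by exact_mod_cast hm
  have htail : ((m - 1 : ℕ) : ℝ) * (m : ℝ)⁻¹ ≤ ∑ i ∈ Ioc 1 m, (i : ℝ)⁻¹ := by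
    rw [← Nat.card_Ioc, ← nsmul_eq_mul]
    refine card_nsmul_le_sum _ _ _ fun i hi => ?_
    obtain ⟨h1i, him⟩ := mem_Ioc.1 hi
    exact inv_anti₀ (by positivity) (by exact_mod_cast him)
  rw [Nat.cast_sub hm, sub_mul, mul_inv_cancel₀ hm'.ne'] at htail
  rw [← sum_Ioc_add_eq_sum_Icc hm]
  push_cast at htail ⊢
  linarith

lemma two_mul_sum_Ioc_inv_lt_sum_Icc_inv {m n : ℕ} (hm : 2 ≤ m) (hn : n ≤ 2 * m) :
    2 * ∑ i ∈ Ioc m n, (i : ℝ)⁻¹ < ∑ i ∈ Icc 1 m, (i : ℝ)⁻¹ := by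
  have hhead := two_sub_inv_le_sum_Icc_inv (m := m) (by omega)
  have htail := sum_Ioc_inv_le m n
  have hnm : ((n - m : ℕ) : ℝ) ≤ m := by exact_mod_cast (by omega : n - m ≤ m)
  have hm' : (2 : ℝ) ≤ m := by exact_mod_cast hm
  have key : 2 * ((m : ℝ) * ((m : ℝ) + 1)⁻¹) < 2 - (m : ℝ)⁻¹ := by
    field_simp
    nlinarith
  calc 2 * ∑ i ∈ Ioc m n, (i : ℝ)⁻¹
      ≤ 2 * ((m : ℝ) * ((m : ℝ) + 1)⁻¹) := by
        gcongr
        exact htail.trans (by gcongr)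
    _ < 2 - (m : ℝ)⁻¹ := key
    _ ≤ _ := hhead

lemma sum_Icc_inv_sub_two_mul_le_sum_div {m k : ℕ} (hmk : m ≤ k) (US : ℕ → ℝ)
    (hbound : ∀ i ∈ Icc 1 k, -2 ≤ US i) (hfirst : ∀ i ∈ Icc 1 m, 1 ≤ US i) :
    ∑ i ∈ Icc 1 m, (i : ℝ)⁻¹ - 2 * ∑ i ∈ Ioc m k, (i : ℝ)⁻¹ ≤ ∑ i ∈ Icc 1 k, US i / i := by
  have hIcc : ∀ n, Icc 1 n = Ioc 0 n := fun n => Icc_add_one_left_eq_Ioc 0 n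
  rw [hIcc, hIcc] at *
  rw [← sum_Ioc_consecutive _ m.zero_le hmk, mul_sum, sub_eq_add_neg, ← sum_neg_distrib]
  gcongr with i hi i hi
  · rw [div_eq_mul_inv]
    exact le_mul_of_one_le_left (by positivity) (hfirst i hi)
  · have hik : i ∈ Ioc 0 k := Ioc_subset_Ioc_left m.zero_le hi
    rw [div_eq_mul_inv, ← neg_mul]
    exact mul_le_mul_of_nonneg_right (hbound i hik) (by positivity)

/-- Proposition 2 (positive half): if the first ⌈k/2⌉ ratings lie in {1, 2}
(i.e. `1 ≤ US i ≤ 2`), the weighted sum and the overall score are strictly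
positive (k ≥ 3). -/
theorem stmt_5 (k : ℕ) (hk : 3 ≤ k) (US : ℕ → ℝ)
    (hbound : ∀ i ∈ Finset.Icc 1 k, -2 ≤ US i ∧ US i ≤ 2)
    (hfirst : ∀ i, 1 ≤ i → i ≤ (k + 1) / 2 → 1 ≤ US i ∧ US i ≤ 2) :
    0 < ∑ i ∈ Finset.Icc 1 k, US i / (i : ℝ) ∧
      0 < (∑ i ∈ Finset.Icc 1 k, US i / (i : ℝ)) /
            (∑ i ∈ Finset.Icc 1 k, (1 : ℝ) / (i : ℝ)) := by
  have hsum : 0 < ∑ i ∈ Icc 1 k, US i / (i : ℝ) := by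
    have hlt := two_mul_sum_Ioc_inv_lt_sum_Icc_inv (m := (k + 1) / 2) (n := k) (by omega) (by omega)
    have hle := sum_Icc_inv_sub_two_mul_le_sum_div (m := (k + 1) / 2) (by omega) US
      (fun i hi => (hbound i hi).1)
      (fun i hi => (hfirst i (mem_Icc.1 hi).1 (mem_Icc.1 hi).2).1)
    linarith
  have hweights : 0 < ∑ i ∈ Icc 1 k, (1 : ℝ) / i :=
    sum_pos (fun i hi => by have := (mem_Icc.1 hi).1; positivity) ⟨1, by simp; omega⟩
  exact ⟨hsum, div_pos hsum hweights⟩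
end

section
/- Let k ≥ 3 be a natural number and let US_1, …, US_k be real numbers with −2 ≤ US_i ≤ 2 for all i. If US_i ∈ {−2, −1} (i.e., −2 ≤ US_i ≤ −1) for every i with 1 ≤ i ≤ ⌈k/2⌉, then the weighted sum Σ_{i=1}^{k} US_i/i is strictly negative (and hence US_overall = (Σ_{i=1}^{k} US_i/i)/(Σ_{i=1}^{k} 1/i) is strictly negative). -/
/-! Put m = ⌈k/2⌉. The first m terms contribute at most -H_m ≤ -(2 - 1/m), and the at most m
remaining terms at most 2/(m+1) each, so at most 2m/(m+1) together. As 2m/(m+1) < 2 - 1/m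
exactly when m > 1, i.e. k ≥ 3, the sum is negative; dividing by H_k > 0 keeps the sign. -/

open Finset

lemma sum_Icc_one_eq_add {M : Type*} [AddCommMonoid M] (f : ℕ → M) {m k : ℕ} (hmk : m ≤ k) :
    ∑ i ∈ Icc 1 k, f i = ∑ i ∈ Icc 1 m, f i + ∑ i ∈ Icc (m + 1) k, f i := by
  have h := sum_Ioc_consecutive f (Nat.zero_le m) hmk
  simp only [← Icc_add_one_left_eq_Ioc, zero_add] at h
  exact h.symm

lemma two_sub_one_div_le_sum_Icc_one_div {m : ℕ} (hm : 1 ≤ m) :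
    2 - 1 / (m : ℝ) ≤ ∑ i ∈ Icc 1 m, 1 / (i : ℝ) := by
  rw [sum_Icc_one_eq_add _ hm, Icc_self, sum_singleton]
  have htail : #(Icc 2 m) • (1 / (m : ℝ)) ≤ ∑ i ∈ Icc 2 m, 1 / (i : ℝ) :=
    card_nsmul_le_sum _ _ _ fun i hi => by
      have hi := mem_Icc.1 hi
      gcongr
      · exact_mod_cast (by omega : 0 < i)
      · exact_mod_cast hi.2
  have hcard : (#(Icc 2 m) : ℝ) = m - 1 := by
    rw [Nat.card_Icc]; push_cast [show m + 1 - 2 = m - 1 by omega, Nat.cast_sub hm]; ring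
  rw [nsmul_eq_mul, hcard] at htail
  have hm0 : (m : ℝ) ≠ 0 := by positivity
  calc 2 - 1 / (m : ℝ) = 1 + (m - 1) * (1 / m) := by field_simp; ring
    _ ≤ _ := by linarith

lemma sum_Icc_add_one_one_div_le {m k : ℕ} (hk : k ≤ 2 * m) :
    ∑ i ∈ Icc (m + 1) k, 1 / (i : ℝ) ≤ m / (m + 1) := by
  have hsum : ∑ i ∈ Icc (m + 1) k, 1 / (i : ℝ) ≤ #(Icc (m + 1) k) • (1 / ((m : ℝ) + 1)) :=
    sum_le_card_nsmul _ _ _ fun i hi => by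
      gcongr
      exact_mod_cast (mem_Icc.1 hi).1
  have hcard : (#(Icc (m + 1) k) : ℝ) ≤ m := by
    rw [Nat.card_Icc]; exact_mod_cast (by omega : k + 1 - (m + 1) ≤ m)
  rw [nsmul_eq_mul] at hsum
  calc _ ≤ _ := hsum
    _ ≤ (m : ℝ) * (1 / (m + 1)) := by gcongr
    _ = m / (m + 1) := by ring

lemma sum_Icc_div_le {US : ℕ → ℝ} {m k : ℕ} (hmk : m ≤ k)
    (hhead : ∀ i ∈ Icc 1 m, US i ≤ -1) (htail : ∀ i ∈ Icc (m + 1) k, US i ≤ 2) :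
    ∑ i ∈ Icc 1 k, US i / i ≤
      -∑ i ∈ Icc 1 m, 1 / (i : ℝ) + 2 * ∑ i ∈ Icc (m + 1) k, 1 / (i : ℝ) := by
  rw [sum_Icc_one_eq_add _ hmk, ← sum_neg_distrib, mul_sum]
  gcongr with i hi i hi
  · rw [← neg_div]; gcongr; exact hhead i hi
  · rw [← mul_div_assoc, mul_one]; gcongr; exact htail i hi

lemma two_mul_div_add_one_lt_two_sub_one_div {m : ℝ} (hm : 1 < m) :
    2 * (m / (m + 1)) < 2 - 1 / m := by
  have hm0 : 0 < m := by linarith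
  rw [← sub_pos]
  field_simp
  nlinarith

/-- Proposition 2 (negative half): if the first ⌈k/2⌉ ratings lie in {−2, −1}
(i.e. `−2 ≤ US i ≤ −1`), the weighted sum and the overall score are strictly
negative (k ≥ 3). -/
theorem stmt_6 (k : ℕ) (hk : 3 ≤ k) (US : ℕ → ℝ)
    (hbound : ∀ i ∈ Finset.Icc 1 k, -2 ≤ US i ∧ US i ≤ 2)
    (hfirst : ∀ i, 1 ≤ i → i ≤ (k + 1) / 2 → -2 ≤ US i ∧ US i ≤ -1) :
    (∑ i ∈ Finset.Icc 1 k, US i / (i : ℝ)) < 0 ∧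
      (∑ i ∈ Finset.Icc 1 k, US i / (i : ℝ)) /
            (∑ i ∈ Finset.Icc 1 k, (1 : ℝ) / (i : ℝ)) < 0 := by
  set m := (k + 1) / 2
  have hm : 2 ≤ m := by omega
  have hneg : ∑ i ∈ Icc 1 k, US i / (i : ℝ) < 0 := by
    have hsum := sum_Icc_div_le (m := m) (by omega)
      (fun i hi => (hfirst i (mem_Icc.1 hi).1 (mem_Icc.1 hi).2).2)
      (fun i hi => (hbound i (mem_Icc.2 ⟨by grind, (mem_Icc.1 hi).2⟩)).2)
    have hhead := two_sub_one_div_le_sum_Icc_one_div (m := m) (by omega)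
    have htail := sum_Icc_add_one_one_div_le (m := m) (k := k) (by omega)
    have hgap := two_mul_div_add_one_lt_two_sub_one_div (m := (m : ℝ)) (by exact_mod_cast hm)
    linarith
  have hharmonic : 0 < ∑ i ∈ Icc 1 k, (1 : ℝ) / (i : ℝ) :=
    sum_pos (fun i hi => by have := (mem_Icc.1 hi).1; positivity) ⟨1, mem_Icc.2 ⟨le_rfl, by omega⟩⟩
  exact ⟨hneg, div_neg_of_neg_of_pos hneg hharmonic⟩
end

section
/- Let (X_i)_{i≥1} be independent real random variables on a probability space, each uniformly distributed on the five-point set {−2, −1, 0, 1, 2} (each value with probability 1/5). Then almost surely the normalized score (Σ_{i=1}^{k} X_i/i)/(Σ_{i=1}^{k} 1/i) tends to 0 as k → ∞. -/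
/-!
By the strong law of large numbers the partial sums `S n = X 1 + ⋯ + X n` are `o(n)` almost
surely; the mean is `0` because the uniform law on `{-2, …, 2}` is symmetric. Summation by parts
writes `∑_{i ≤ k} X i / i` as `S k / (k + 1)` plus a sum of terms `o(1 / i)`, and both pieces are
`o(H_k)` since the harmonic sums `H_k` diverge.
-/

open MeasureTheory ProbabilityTheory Filter Finset Topology Asymptotics

theorem Finset.sum_Icc_one_eq_sum_range {M : Type*} [AddCommMonoid M] (f : ℕ → M) (n : ℕ) :
    ∑ i ∈ Icc 1 n, f i = ∑ i ∈ range n, f (i + 1) := by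
  rw [range_eq_Ico, sum_Ico_add' f 0 n 1]
  rfl

theorem sum_range_div_succ_eq (u : ℕ → ℝ) (n : ℕ) :
    ∑ i ∈ range n, u i / (i + 1) =
      (∑ i ∈ range n, u i) / (n + 1) +
        ∑ i ∈ range n, (∑ j ∈ range (i + 1), u j) / (i + 2) / (i + 1) := by
  induction n with
  | zero => simp
  | succ n ih =>
    rw [sum_range_succ, ih, sum_range_succ _ n, sum_range_succ _ n, sum_range_succ u n]
    push_cast
    field_simp
    ring

theorem tendsto_sum_range_div_succ_div_harmonic {u : ℕ → ℝ}
    (hu : Tendsto (fun n => (∑ i ∈ range n, u i) / n) atTop (𝓝 0)) :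
    Tendsto (fun n => (∑ i ∈ range n, u i / (i + 1)) / ∑ i ∈ range n, 1 / ((i : ℝ) + 1))
      atTop (𝓝 0) := by
  set t : ℕ → ℝ := fun n => (∑ i ∈ range n, u i) / (n + 1)
  have ht : Tendsto t atTop (𝓝 0) := by
    have h := hu.mul (tendsto_natCast_div_add_atTop (1 : ℝ))
    rw [zero_mul] at h
    refine h.congr' ?_
    filter_upwards [eventually_ne_atTop 0] with n hn
    simp only [t]
    field_simp
  have hH : Tendsto (fun n => ∑ i ∈ range n, 1 / ((i : ℝ) + 1)) atTop atTop :=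
    Real.tendsto_sum_range_one_div_nat_succ_atTop
  have hfirst : t =o[atTop] fun n => ∑ i ∈ range n, 1 / ((i : ℝ) + 1) :=
    ((isLittleO_one_iff ℝ).2 ht).trans
      ((isLittleO_one_left_iff ℝ).2 (tendsto_norm_atTop_atTop.comp hH))
  have hterm : (fun i => t (i + 1) / (i + 1)) =o[atTop] fun i => 1 / ((i : ℝ) + 1) := by
    have h := ((isLittleO_one_iff ℝ).2 (ht.comp (tendsto_add_atTop_nat 1))).mul_isBigO
      (isBigO_refl (fun i : ℕ => 1 / ((i : ℝ) + 1)) atTop)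
    simpa only [one_mul, Function.comp_apply, div_eq_mul_one_div (t _)] using h
  have hsecond := hterm.sum_range (fun i => by positivity) hH
  refine ((hfirst.add hsecond).congr_left fun n => ?_).tendsto_div_nhds_zero
  simp only [t, sum_range_div_succ_eq u n, Nat.cast_add, Nat.cast_one, add_assoc,
    one_add_one_eq_two]

theorem MeasureTheory.Integrable.of_mem_finite {Ω E : Type*} [MeasurableSpace Ω] {μ : Measure Ω}
    [IsFiniteMeasure μ] [NormedAddCommGroup E] {s : Set E} {f : Ω → E} (hs : s.Finite)
    (hf : AEStronglyMeasurable f μ) (hfs : ∀ ω, f ω ∈ s) : Integrable f μ := by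
  obtain ⟨C, hC⟩ := isBounded_iff_forall_norm_le.1 hs.isBounded
  exact .of_bound hf C (ae_of_all _ fun ω => hC _ (hfs ω))

open scoped Classical in
theorem MeasureTheory.measure_preimage_eq_sum_preimage_singleton {Ω α : Type*}
    [MeasurableSpace Ω] [MeasurableSpace α] [MeasurableSingletonClass α] {μ : Measure Ω}
    {f : Ω → α} (hf : Measurable f) (S : Finset α) (hfS : ∀ ω, f ω ∈ S) (t : Set α) :
    μ (f ⁻¹' t) = ∑ c ∈ S with c ∈ t, μ (f ⁻¹' {c}) := by
  rw [sum_measure_preimage_singleton _ fun c _ => hf (measurableSet_singleton c)]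
  congr 1
  ext ω
  simp [hfS ω]

namespace ProbabilityTheory

variable {Ω Ω' α : Type*} [MeasurableSpace Ω] [MeasurableSpace Ω'] [MeasurableSpace α]
  {μ : Measure Ω} {ν : Measure Ω'}

theorem IdentDistrib.of_measure_preimage_singleton_eq [MeasurableSingletonClass α] {s : Set α}
    {f : Ω → α} {g : Ω' → α} (hs : s.Finite) (hf : Measurable f) (hg : Measurable g)
    (hfs : ∀ ω, f ω ∈ s) (hgs : ∀ ω, g ω ∈ s)
    (h : ∀ c ∈ s, μ (f ⁻¹' {c}) = ν (g ⁻¹' {c})) : IdentDistrib f g μ ν := by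
  classical
  refine ⟨hf.aemeasurable, hg.aemeasurable, Measure.ext fun t ht => ?_⟩
  rw [Measure.map_apply hf ht, Measure.map_apply hg ht,
    measure_preimage_eq_sum_preimage_singleton hf hs.toFinset (by simpa using hfs),
    measure_preimage_eq_sum_preimage_singleton hg hs.toFinset (by simpa using hgs)]
  exact sum_congr rfl fun c hc => h c (by simpa using (mem_filter.1 hc).1)

theorem IdentDistrib.integral_eq_zero_of_neg {f : Ω → ℝ} (h : IdentDistrib f (-f) μ μ) :
    ∫ ω, f ω ∂μ = 0 := by
  have := h.integral_eq
  rw [Pi.neg_def, integral_neg] at this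
  linarith

end ProbabilityTheory

/-- Proposition 3, case (i), conclusion: for independent ratings, each uniform
on {−2, −1, 0, 1, 2}, the normalized score tends to 0 almost surely. -/
theorem stmt_10 {Ω : Type*} [MeasurableSpace Ω] (μ : Measure Ω)
    [IsProbabilityMeasure μ] (X : ℕ → Ω → ℝ)
    (hmeas : ∀ i, Measurable (X i))
    (hindep : ProbabilityTheory.iIndepFun X μ)
    (hval : ∀ i, 1 ≤ i → ∀ ω, X i ω ∈ ({-2, -1, 0, 1, 2} : Set ℝ))
    (hunif : ∀ i, 1 ≤ i → ∀ c ∈ ({-2, -1, 0, 1, 2} : Set ℝ),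
      μ {ω | X i ω = c} = 1 / 5) :
    ∀ᵐ ω ∂μ,
      Tendsto (fun k => (∑ i ∈ Finset.Icc 1 k, X i ω / (i : ℝ)) /
          (∑ i ∈ Finset.Icc 1 k, (1 : ℝ) / (i : ℝ))) atTop (nhds 0) := by
  have hfin : ({-2, -1, 0, 1, 2} : Set ℝ).Finite := by simp
  have hneg : ∀ c ∈ ({-2, -1, 0, 1, 2} : Set ℝ), -c ∈ ({-2, -1, 0, 1, 2} : Set ℝ) := by
    intro c hc
    rcases hc with rfl | rfl | rfl | rfl | rfl <;> norm_num
  set Y : ℕ → Ω → ℝ := fun j => X (j + 1)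
  have hident (j : ℕ) : IdentDistrib (Y j) (Y 0) μ μ :=
    .of_measure_preimage_singleton_eq hfin (hmeas _) (hmeas _) (hval _ (by omega)) (hval 1 le_rfl)
      fun c hc => (hunif _ (by omega) c hc).trans (hunif 1 le_rfl c hc).symm
  have hsymm : IdentDistrib (Y 0) (-Y 0) μ μ :=
    .of_measure_preimage_singleton_eq hfin (hmeas 1) (hmeas 1).neg (hval 1 le_rfl)
      (fun ω => hneg _ (hval 1 le_rfl ω)) fun c hc => by
        rw [show (-Y 0) ⁻¹' {c} = Y 0 ⁻¹' {-c} by ext; simp [neg_eq_iff_eq_neg]]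
        exact (hunif 1 le_rfl c hc).trans (hunif 1 le_rfl (-c) (hneg c hc)).symm
  have hint : Integrable (Y 0) μ :=
    .of_mem_finite hfin (hmeas 1).aestronglyMeasurable (hval 1 le_rfl)
  have hslln := strong_law_ae_real Y hint (fun i j hij => hindep.indepFun (by omega)) hident
  filter_upwards [hslln] with ω hω
  rw [hsymm.integral_eq_zero_of_neg] at hω
  simpa only [sum_Icc_one_eq_sum_range, Nat.cast_add, Nat.cast_one]
    using tendsto_sum_range_div_succ_div_harmonic hω
end
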